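/- arXiv:1501.03351 — 6 statements merged into one kernel-verified Lean document; each statement's English description precedes it below -/
import Mathlib

section
/- Let k ≥ 1 and let η be a configuration such that σ_η(y) = 1 for all y with |y − x| ≤ 2k. Then almost surely σ_{R^k(η)}(x) = 1. Equivalently, p_k^S(n,m) = 0 whenever n, m ≥ 2k. -/
open MeasureTheory ENNReal
open scoped Classical

/-- A configuration: a coloring of `ℤ` with the two colors coded by `Bool`. -/
abbrev Config := ℤ → Bool

/-- A site `x` is unstable in `η` iff it lies in a monochromatic chain of length (at least) 3,
i.e. there is `y ∈ {x-2, x-1, x}` with `η y = η (y+1) = η (y+2)`. Spelled out explicitly. -/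
def Unstable (η : Config) (x : ℤ) : Prop :=
  (η (x - 2) = η (x - 1) ∧ η (x - 1) = η x) ∨
  (η (x - 1) = η x ∧ η x = η (x + 1)) ∨
  (η x = η (x + 1) ∧ η (x + 1) = η (x + 2))

instance (η : Config) (x : ℤ) : Decidable (Unstable η x) := by
  unfold Unstable; infer_instance

/-- One step of the dynamics: stable sites keep their color, unstable ones are recolored
using the fresh colors `c`. -/
def update (η : Config) (c : ℤ → Bool) : Config :=
  fun x => if Unstable η x then c x else η x

/-- `evolve ω η k = R^k(η)`: the configuration after `k` steps, where the simultaneous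
recoloring at step `j` uses the fresh colors `ω j`. -/
def evolve (ω : ℕ → ℤ → Bool) (η : Config) : ℕ → Config
  | 0 => η
  | k + 1 => update (evolve ω η k) (ω k)

/-- `μ` makes the coordinates of the coin field i.i.d. uniform on the two colors:
every finite cylinder event has probability `(1/2)^(number of coordinates)`. -/
def IIDCoins (μ : Measure (ℕ → ℤ → Bool)) : Prop :=
  ∀ (S : Finset (ℕ × ℤ)) (f : ℕ × ℤ → Bool),
    μ {ω | ∀ p ∈ S, ω p.1 p.2 = f p} = (1 / 2 : ℝ≥0∞) ^ S.card

/-- The number of unstable sites of a configuration. -/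
noncomputable def numUnstable (η : Config) : ℕ∞ := {x : ℤ | Unstable η x}.encard

/-- `p_k^I`: sup over configurations `η` with site `0` unstable of `P(σ_{R^k(η)}(0) = 0)`. -/
noncomputable def pI (μ : Measure (ℕ → ℤ → Bool)) (k : ℕ) : ℝ≥0∞ :=
  ⨆ (η : Config) (_ : Unstable η 0), μ {ω | Unstable (evolve ω η k) 0}

/-- `p_k^{III}`: sup over configurations `η` with sites `-1, 0, 1` all unstable of
`P(σ_{R^k(η)}(0) = 0)`. -/
noncomputable def pIII (μ : Measure (ℕ → ℤ → Bool)) (k : ℕ) : ℝ≥0∞ :=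
  ⨆ (η : Config) (_ : Unstable η (-1) ∧ Unstable η 0 ∧ Unstable η 1),
    μ {ω | Unstable (evolve ω η k) 0}

/-- The conditioning event of `p_k^S(n,m)` (at site `0`): all sites `i` with `-n ≤ i ≤ m`
are stable, and the boundary sites `-n-1` (if `n` is finite) and `m+1` (if `m` is finite)
are unstable.  The inequality `-n ≤ i ≤ m` in `ℕ∞` is coded using `Int.toNat`. -/
def SWindow (η : Config) (n m : ℕ∞) : Prop :=
  (∀ i : ℤ, (((-i).toNat : ℕ∞) ≤ n) → ((i.toNat : ℕ∞) ≤ m) → ¬ Unstable η i) ∧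
  (∀ nn : ℕ, n = (nn : ℕ∞) → Unstable η (-(nn : ℤ) - 1)) ∧
  (∀ mm : ℕ, m = (mm : ℕ∞) → Unstable η ((mm : ℤ) + 1))

/-- `p_k^S(n,m)` for `n, m ∈ ℕ ∪ {∞}`: sup over configurations `η` satisfying the stable-window
condition of `P(σ_{R^k(η)}(0) = 0)`. -/
noncomputable def pS (μ : Measure (ℕ → ℤ → Bool)) (k : ℕ) (n m : ℕ∞) : ℝ≥0∞ :=
  ⨆ (η : Config) (_ : SWindow η n m), μ {ω | Unstable (evolve ω η k) 0}


lemma update_stable_of_window (η : Config) (c : ℤ → Bool) (y : ℤ)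
    (h : ∀ z : ℤ, |z - y| ≤ 2 → ¬ Unstable η z) : ¬ Unstable (update η c) y := by
  have e : ∀ z : ℤ, |z - y| ≤ 2 → update η c z = η z := by
    intro z hz
    simp [update, h z hz]
  have e1 := e (y - 2) (by simp [abs_le])
  have e2 := e (y - 1) (by simp [abs_le])
  have e3 := e y (by simp)
  have e4 := e (y + 1) (by simp [abs_le])
  have e5 := e (y + 2) (by simp [abs_le])
  have hy := h y (by simp)
  unfold Unstable at hy ⊢
  rw [e1, e2, e3, e4, e5]
  exact hy

lemma evolve_stable_of_window (η : Config) (ω : ℕ → ℤ → Bool) (x : ℤ) (k : ℕ)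
    (h : ∀ y : ℤ, |y - x| ≤ 2 * k → ¬ Unstable η y) :
    ∀ j : ℕ, j ≤ k → ∀ y : ℤ, |y - x| ≤ 2 * (k - j : ℕ) → ¬ Unstable (evolve ω η j) y := by
  intro j
  induction j with
  | zero => intro _ y hy; exact h y (by simpa using hy)
  | succ j ih =>
    intro hjk y hy
    apply update_stable_of_window
    intro z hz
    apply ih (by omega)
    have h1 : |z - x| ≤ |z - y| + |y - x| := abs_sub_le z y x
    have h2 : ((k - (j+1) : ℕ) : ℤ) + 1 = ((k - j : ℕ) : ℤ) := by omega
    omega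

/-- if all sites within distance `2k` of `x` are stable in `η`, then a.s. `x` is
stable in `R^k(η)`; equivalently `p_k^S(n,m) = 0` whenever `n, m ≥ 2k`. -/
theorem stable_window_stays_stable (μ : Measure (ℕ → ℤ → Bool)) [IsProbabilityMeasure μ]
    (hμ : IIDCoins μ) (k : ℕ) (hk : 1 ≤ k) :
    (∀ (η : Config) (x : ℤ), (∀ y : ℤ, |y - x| ≤ 2 * k → ¬ Unstable η y) →
      μ {ω | Unstable (evolve ω η k) x} = 0) ∧
    (∀ n m : ℕ∞, 2 * k ≤ n → 2 * k ≤ m → pS μ k n m = 0) := by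
  have main : ∀ (η : Config) (x : ℤ), (∀ y : ℤ, |y - x| ≤ 2 * k → ¬ Unstable η y) →
      μ {ω | Unstable (evolve ω η k) x} = 0 := by
    intro η x h
    have : {ω : ℕ → ℤ → Bool | Unstable (evolve ω η k) x} = ∅ := by
      ext ω
      simp only [Set.mem_setOf_eq, Set.mem_empty_iff_false, iff_false]
      exact evolve_stable_of_window η ω x k h k le_rfl x (by simp)
    rw [this]; exact measure_empty
  refine ⟨main, ?_⟩
  intro n m hn hm
  simp only [pS, iSup_eq_zero]
  intro η hη
  apply main η 0
  intro y hy
  have hy' : -(2*(k:ℤ)) ≤ y ∧ y ≤ 2*(k:ℤ) := abs_le.mp (by simpa using hy)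
  apply hη.1 y
  · calc ((-y).toNat : ℕ∞) ≤ ((2 * k : ℕ) : ℕ∞) := by
          exact_mod_cast (by omega : (-y).toNat ≤ 2 * k)
      _ ≤ n := by exact_mod_cast (by push_cast; exact hn)
  · calc ((y).toNat : ℕ∞) ≤ ((2 * k : ℕ) : ℕ∞) := by
          exact_mod_cast (by omega : y.toNat ≤ 2 * k)
      _ ≤ m := by exact_mod_cast (by push_cast; exact hm)
end

section
/- For every k ≥ 1, every m ∈ ℕ ∪ {∞}, and all n₁, n₂ ≥ 2k: p_k^S(n₁, m) = p_k^S(n₂, m) = p_k^S(∞, m), and symmetrically p_k^S(n, m₁) = p_k^S(n, m₂) = p_k^S(n, ∞) for all m₁, m₂ ≥ 2k. -/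
open MeasureTheory ENNReal
open scoped Classical

/-!
Whether a site is unstable depends only on the colours within distance two, so disagreement
between two configurations spreads by at most two sites per step. If they agree on `[-N, ∞)` and
`-N, -N + 1` are stable in both, these two sites keep their colours in the first step, so after
`k ≥ 1` steps the configurations still agree on `[-N + 2(k - 1), ∞)`, which for `N ≥ 2k` contains
the neighbourhood `[-2, 2]` deciding the stability of `0`. Recolouring everything left of `-N`
alternately removes the unstable site `-N - 1` without creating new ones, and recolouring it
constantly with the colour opposite to that of `-N` creates it; this turns windows of left length
`N` and `∞` into each other without changing the probability. The right-hand statement follows by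
reflecting `ℤ`, which replaces the law of the coins by its image under the reflection.
-/

lemma unstable_congr {η η' : Config} {x : ℤ}
    (h : ∀ y, x - 2 ≤ y → y ≤ x + 2 → η y = η' y) : Unstable η x ↔ Unstable η' x := by
  unfold Unstable
  rw [h (x - 2) (by omega) (by omega), h (x - 1) (by omega) (by omega), h x (by omega) (by omega),
    h (x + 1) (by omega) (by omega), h (x + 2) (by omega) (by omega)]

def IsMonoTriple (η : Config) (y : ℤ) : Prop := η y = η (y + 1) ∧ η (y + 1) = η (y + 2)

lemma IsMonoTriple.unstable {η : Config} {y : ℤ} (h : IsMonoTriple η y) : Unstable η y :=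
  Or.inr (Or.inr h)

lemma unstable_iff_isMonoTriple {η : Config} {x : ℤ} :
    Unstable η x ↔ IsMonoTriple η (x - 2) ∨ IsMonoTriple η (x - 1) ∨ IsMonoTriple η x := by
  unfold Unstable IsMonoTriple
  ring_nf

lemma unstable_iff_exists_isMonoTriple {η : Config} {x : ℤ} :
    Unstable η x ↔ ∃ y, x - 2 ≤ y ∧ y ≤ x ∧ IsMonoTriple η y := by
  rw [unstable_iff_isMonoTriple]
  constructor
  · rintro (h | h | h)
    · exact ⟨_, le_rfl, by omega, h⟩
    · exact ⟨_, by omega, by omega, h⟩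
    · exact ⟨_, by omega, le_rfl, h⟩
  · rintro ⟨y, h1, h2, hy⟩
    obtain rfl | rfl | rfl : y = x - 2 ∨ y = x - 1 ∨ y = x := by omega
    exacts [Or.inl hy, Or.inr (Or.inl hy), Or.inr (Or.inr hy)]

lemma update_congr {η η' : Config} {c : ℤ → Bool} {x : ℤ}
    (h : ∀ y, x - 2 ≤ y → y ≤ x + 2 → η y = η' y) : update η c x = update η' c x := by
  simp only [update, unstable_congr h, h x (by omega) (by omega)]

lemma update_of_not_unstable {η : Config} {c : ℤ → Bool} {x : ℤ} (h : ¬ Unstable η x) :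
    update η c x = η x :=
  if_neg h

lemma evolve_succ_eq_of_eq_on_Ici (ω : ℕ → ℤ → Bool) {η η' : Config} {a : ℤ}
    (h : ∀ x, a ≤ x → η x = η' x) (hη : ∀ x, a ≤ x → x ≤ a + 1 → ¬ Unstable η x)
    (hη' : ∀ x, a ≤ x → x ≤ a + 1 → ¬ Unstable η' x) (t : ℕ) :
    ∀ x, a + 2 * t ≤ x → evolve ω η (t + 1) x = evolve ω η' (t + 1) x := by
  induction t with
  | zero =>
    intro x hx
    by_cases hx2 : a + 2 ≤ x
    · exact update_congr fun y hy _ => h y (by omega)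
    · show update η (ω 0) x = update η' (ω 0) x
      rw [update_of_not_unstable (hη x (by omega) (by omega)),
        update_of_not_unstable (hη' x (by omega) (by omega)), h x (by omega)]
  | succ t ih => exact fun x hx => update_congr fun y hy _ => ih y (by omega)

lemma unstable_evolve_zero_iff_of_eq_on_Ici (ω : ℕ → ℤ → Bool) {η η' : Config} {a : ℤ} {k : ℕ}
    (hk : 1 ≤ k) (ha : a + 2 * k ≤ 0) (h : ∀ x, a ≤ x → η x = η' x)
    (hη : ∀ x, a ≤ x → x ≤ a + 1 → ¬ Unstable η x)
    (hη' : ∀ x, a ≤ x → x ≤ a + 1 → ¬ Unstable η' x) :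
    Unstable (evolve ω η k) 0 ↔ Unstable (evolve ω η' k) 0 := by
  obtain ⟨t, rfl⟩ : ∃ t, k = t + 1 := ⟨k - 1, by omega⟩
  exact unstable_congr fun y hy _ =>
    evolve_succ_eq_of_eq_on_Ici ω h hη hη' t y (by push_cast at ha; omega)

lemma toNat_cast_le_of_le {i j : ℤ} {m : ℕ∞} (hij : i ≤ j) (hj : (j.toNat : ℕ∞) ≤ m) :
    (i.toNat : ℕ∞) ≤ m :=
  le_trans (Nat.cast_le.mpr (Int.toNat_le_toNat hij)) hj

lemma sWindow_coe_left_iff {η : Config} {N : ℕ} {m : ℕ∞} :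
    SWindow η N m ↔ (∀ i : ℤ, -(N : ℤ) ≤ i → (i.toNat : ℕ∞) ≤ m → ¬ Unstable η i) ∧
      Unstable η (-(N : ℤ) - 1) ∧ (∀ mm : ℕ, m = mm → Unstable η (mm + 1)) := by
  simp [SWindow, Int.toNat_le, neg_le]

lemma sWindow_top_left_iff {η : Config} {m : ℕ∞} :
    SWindow η ⊤ m ↔ (∀ i : ℤ, (i.toNat : ℕ∞) ≤ m → ¬ Unstable η i) ∧
      (∀ mm : ℕ, m = mm → Unstable η (mm + 1)) := by
  simp [SWindow]

lemma SWindow.not_unstable_of_le_zero {η : Config} {n m : ℕ∞} (h : SWindow η n m) {N : ℕ}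
    (hN : (N : ℕ∞) ≤ n) {x : ℤ} (hx : -(N : ℤ) ≤ x) (hx0 : x ≤ 0) : ¬ Unstable η x :=
  h.1 x ((Nat.cast_le.mpr (Int.toNat_le.mpr (by omega))).trans hN)
    (by simp [Int.toNat_eq_zero.mpr hx0])

lemma isMonoTriple_piecewise_Ici {η τ : Config} {a : ℤ} (hb : τ (a - 1) ≠ η a) {y : ℤ}
    (h : IsMonoTriple ((Set.Ici a).piecewise η τ) y) :
    (y + 2 < a ∧ IsMonoTriple τ y) ∨ (a ≤ y ∧ IsMonoTriple η y) := by
  have inside : ∀ x, a ≤ x → (Set.Ici a).piecewise η τ x = η x :=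
    fun x hx => Set.piecewise_eq_of_mem _ _ _ (Set.mem_Ici.mpr hx)
  have outside : ∀ x, x < a → (Set.Ici a).piecewise η τ x = τ x :=
    fun x hx => Set.piecewise_eq_of_notMem _ _ _ (by simpa using hx)
  rcases lt_or_ge (y + 2) a with hy | hy
  · left
    rw [IsMonoTriple, outside y (by omega), outside (y + 1) (by omega),
      outside (y + 2) hy] at h
    exact ⟨hy, h⟩
  rcases le_or_gt a y with hay | hay
  · right
    rw [IsMonoTriple, inside y hay, inside (y + 1) (by omega), inside (y + 2) (by omega)] at h
    exact ⟨hay, h⟩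
  exfalso
  obtain rfl | rfl : y = a - 1 ∨ y = a - 2 := by omega
  · rw [IsMonoTriple, outside _ (by omega), sub_add_cancel, inside a le_rfl] at h
    exact hb h.1
  · rw [IsMonoTriple, show a - 2 + 1 = a - 1 by ring, show a - 2 + 2 = a by ring,
      outside (a - 1) (by omega), inside a le_rfl] at h
    exact hb h.2

lemma unstable_piecewise_Ici_iff {η τ : Config} {a x : ℤ} (hx : a + 2 ≤ x) :
    Unstable ((Set.Ici a).piecewise η τ) x ↔ Unstable η x :=
  unstable_congr fun y hy _ => Set.piecewise_eq_of_mem _ _ _ (Set.mem_Ici.mpr (by omega))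

lemma exists_alternating (b : Bool) (a : ℤ) : ∃ τ : Config, τ a = b ∧ ∀ x, τ x ≠ τ (x + 1) := by
  refine ⟨fun x => if Even (x - a) then b else !b, by simp, fun x => ?_⟩
  simp only [show x + 1 - a = x - a + 1 by ring]
  by_cases h : Even (x - a) <;> simp [h]

lemma sWindow_top_piecewise {η τ : Config} {N : ℕ} {m : ℕ∞} (hN : 1 ≤ N)
    (hη : SWindow η N m) (hb : τ (-N - 1) ≠ η (-N)) (hτ : ∀ x, τ x ≠ τ (x + 1)) :
    SWindow ((Set.Ici (-(N : ℤ))).piecewise η τ) ⊤ m := by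
  obtain ⟨hstable, -, hright⟩ := sWindow_coe_left_iff.mp hη
  refine sWindow_top_left_iff.mpr ⟨fun i hi hU => ?_, fun mm hmm => ?_⟩
  · obtain ⟨y, -, hyi, hy⟩ := unstable_iff_exists_isMonoTriple.mp hU
    rcases isMonoTriple_piecewise_Ici hb hy with ⟨-, hτy⟩ | ⟨hNy, hηy⟩
    · exact hτ y hτy.1
    · exact hstable y hNy (toNat_cast_le_of_le hyi hi) hηy.unstable
  · exact (unstable_piecewise_Ici_iff (by omega)).mpr (hright mm hmm)

lemma sWindow_coe_piecewise_const {η : Config} {N : ℕ} {m : ℕ∞} (hN : 1 ≤ N)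
    (hη : SWindow η ⊤ m) :
    SWindow ((Set.Ici (-(N : ℤ))).piecewise η fun _ => !η (-N)) N m := by
  obtain ⟨hstable, hright⟩ := sWindow_top_left_iff.mp hη
  have outside : ∀ x, x < -(N : ℤ) →
      (Set.Ici (-(N : ℤ))).piecewise η (fun _ => !η (-N)) x = !η (-N) :=
    fun x hx => Set.piecewise_eq_of_notMem _ _ _ (by simpa using hx)
  refine sWindow_coe_left_iff.mpr ⟨fun i hNi hi hU => ?_, ?_, fun mm hmm => ?_⟩
  · obtain ⟨y, hiy, hyi, hy⟩ := unstable_iff_exists_isMonoTriple.mp hU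
    rcases isMonoTriple_piecewise_Ici (by simp) hy with ⟨hyN, -⟩ | ⟨-, hηy⟩
    · omega
    · exact hstable y (toNat_cast_le_of_le hyi hi) hηy.unstable
  · refine Or.inl ⟨?_, ?_⟩ <;> rw [outside _ (by omega), outside _ (by omega)]
  · exact (unstable_piecewise_Ici_iff (by omega)).mpr (hright mm hmm)

lemma pS_le_pS_of_forall_exists {μ : Measure (ℕ → ℤ → Bool)} {k : ℕ} {n n' m : ℕ∞}
    (h : ∀ η, SWindow η n m → ∃ η', SWindow η' n' m ∧
      ∀ ω, Unstable (evolve ω η k) 0 ↔ Unstable (evolve ω η' k) 0) :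
    pS μ k n m ≤ pS μ k n' m := by
  refine iSup₂_le fun η hη => ?_
  obtain ⟨η', hη', hiff⟩ := h η hη
  calc μ {ω | Unstable (evolve ω η k) 0} = μ {ω | Unstable (evolve ω η' k) 0} := by
        simp only [hiff]
    _ ≤ pS μ k n' m := le_iSup₂ (f := fun η _ => μ {ω | Unstable (evolve ω η k) 0}) η' hη'

lemma unstable_evolve_zero_iff_piecewise {η τ : Config} {k N : ℕ} {n n' m : ℕ∞} (hk : 1 ≤ k)
    (hN : 2 * k ≤ N) (hη : SWindow η n m) (hn : (N : ℕ∞) ≤ n)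
    (hη' : SWindow ((Set.Ici (-(N : ℤ))).piecewise η τ) n' m) (hn' : (N : ℕ∞) ≤ n')
    (ω : ℕ → ℤ → Bool) :
    Unstable (evolve ω η k) 0 ↔
      Unstable (evolve ω ((Set.Ici (-(N : ℤ))).piecewise η τ) k) 0 :=
  unstable_evolve_zero_iff_of_eq_on_Ici ω hk (by omega)
    (fun x hx => (Set.piecewise_eq_of_mem _ _ _ (Set.mem_Ici.mpr hx)).symm)
    (fun x hx _ => hη.not_unstable_of_le_zero hn hx (by omega))
    (fun x hx _ => hη'.not_unstable_of_le_zero hn' hx (by omega))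

lemma pS_coe_left_eq_top (μ : Measure (ℕ → ℤ → Bool)) {k N : ℕ} (hk : 1 ≤ k) (hN : 2 * k ≤ N)
    (m : ℕ∞) : pS μ k N m = pS μ k ⊤ m := by
  have hN1 : 1 ≤ N := by omega
  refine le_antisymm (pS_le_pS_of_forall_exists fun η hη => ?_)
    (pS_le_pS_of_forall_exists fun η hη => ?_)
  · obtain ⟨τ, hτb, hτ⟩ := exists_alternating (!η (-N)) (-N - 1)
    have hη' := sWindow_top_piecewise hN1 hη (by simp [hτb]) hτ
    exact ⟨_, hη', unstable_evolve_zero_iff_piecewise hk hN hη le_rfl hη' le_top⟩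
  · have hη' := sWindow_coe_piecewise_const hN1 hη
    exact ⟨_, hη', unstable_evolve_zero_iff_piecewise hk hN hη le_top hη' le_rfl⟩

lemma pS_left_eq_top (μ : Measure (ℕ → ℤ → Bool)) {k : ℕ} (hk : 1 ≤ k) {n : ℕ∞}
    (hn : 2 * k ≤ n) (m : ℕ∞) : pS μ k n m = pS μ k ⊤ m := by
  induction n using ENat.recTopCoe with
  | top => rfl
  | coe N => exact pS_coe_left_eq_top μ hk (by exact_mod_cast hn) m

def reflect (η : Config) : Config := fun x => η (-x)

lemma reflect_involutive : Function.Involutive reflect :=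
  fun η => funext fun x => by simp [reflect]

lemma unstable_reflect {η : Config} {x : ℤ} : Unstable (reflect η) x ↔ Unstable η (-x) := by
  simp only [Unstable, reflect, sub_eq_add_neg, neg_add, neg_neg]
  grind

lemma update_reflect (η : Config) (c : ℤ → Bool) :
    update (reflect η) (reflect c) = reflect (update η c) :=
  funext fun x => by simp only [update, reflect, unstable_reflect]

def reflectCoins : (ℕ → ℤ → Bool) ≃ᵐ (ℕ → ℤ → Bool) :=
  MeasurableEquiv.ofInvolutive (fun ω j => reflect (ω j))
    (fun ω => funext fun j => reflect_involutive (ω j)) (by unfold reflect; fun_prop)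

lemma evolve_reflect (ω : ℕ → ℤ → Bool) (η : Config) (k : ℕ) :
    evolve ω (reflect η) k = reflect (evolve (reflectCoins ω) η k) := by
  induction k with
  | zero => rfl
  | succ k ih =>
    rw [evolve, evolve, ih, ← update_reflect]
    congr 1
    exact (reflect_involutive (ω k)).symm

lemma sWindow_reflect {η : Config} {n m : ℕ∞} : SWindow (reflect η) n m ↔ SWindow η m n := by
  simp only [SWindow, unstable_reflect, neg_sub, sub_neg_eq_add, neg_add', add_comm (1 : ℤ)]
  refine and_congr ((Equiv.neg ℤ).forall_congr fun i => ?_) and_comm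
  simp only [Equiv.neg_apply, neg_neg]
  exact imp.swap

lemma pS_eq_pS_map_reflectCoins (μ : Measure (ℕ → ℤ → Bool)) (k : ℕ) (n m : ℕ∞) :
    pS μ k n m = pS (μ.map reflectCoins) k m n := by
  unfold pS
  rw [← (reflect_involutive.toPerm reflect).iSup_comp]
  refine iSup_congr fun η => ?_
  simp only [Function.Involutive.coe_toPerm, sWindow_reflect, evolve_reflect, unstable_reflect,
    neg_zero, MeasurableEquiv.map_apply]
  rfl

lemma pS_right_eq_top (μ : Measure (ℕ → ℤ → Bool)) {k : ℕ} (hk : 1 ≤ k) {m : ℕ∞}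
    (hm : 2 * k ≤ m) (n : ℕ∞) : pS μ k n m = pS μ k n ⊤ := by
  rw [pS_eq_pS_map_reflectCoins, pS_left_eq_top _ hk hm, ← pS_eq_pS_map_reflectCoins]

theorem pS_constant_far_general (μ : Measure (ℕ → ℤ → Bool))
    (k : ℕ) (hk : 1 ≤ k) :
    (∀ (m : ℕ∞) (n₁ n₂ : ℕ∞), 2 * k ≤ n₁ → 2 * k ≤ n₂ →
      pS μ k n₁ m = pS μ k n₂ m ∧ pS μ k n₁ m = pS μ k ⊤ m) ∧
    (∀ (n : ℕ∞) (m₁ m₂ : ℕ∞), 2 * k ≤ m₁ → 2 * k ≤ m₂ →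
      pS μ k n m₁ = pS μ k n m₂ ∧ pS μ k n m₁ = pS μ k n ⊤) :=
  ⟨fun m _ _ h₁ h₂ => ⟨(pS_left_eq_top μ hk h₁ m).trans (pS_left_eq_top μ hk h₂ m).symm,
      pS_left_eq_top μ hk h₁ m⟩,
    fun n _ _ h₁ h₂ => ⟨(pS_right_eq_top μ hk h₁ n).trans (pS_right_eq_top μ hk h₂ n).symm,
      pS_right_eq_top μ hk h₁ n⟩⟩

/-- `p_k^S(n, m)` does not depend on `n` as long as `n ≥ 2k` (it then equals
`p_k^S(∞, m)`), and symmetrically in the second coordinate. -/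
theorem pS_constant_far (μ : Measure (ℕ → ℤ → Bool)) [IsProbabilityMeasure μ]
    (hμ : IIDCoins μ) (k : ℕ) (hk : 1 ≤ k) :
    (∀ (m : ℕ∞) (n₁ n₂ : ℕ∞), 2 * k ≤ n₁ → 2 * k ≤ n₂ →
      pS μ k n₁ m = pS μ k n₂ m ∧ pS μ k n₁ m = pS μ k ⊤ m) ∧
    (∀ (n : ℕ∞) (m₁ m₂ : ℕ∞), 2 * k ≤ m₁ → 2 * k ≤ m₂ →
      pS μ k n m₁ = pS μ k n m₂ ∧ pS μ k n m₁ = pS μ k n ⊤) :=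
  pS_constant_far_general μ k hk
end

section
/- Let η be a configuration whose set U of unstable sites is finite. Then at least a third of the unstable sites have two unstable neighbors: |{x ∈ U : x−1 ∈ U and x+1 ∈ U}| ≥ |U|/3. -/
open MeasureTheory ENNReal
open scoped Classical

lemma chain_unstable (η : Config) (a : ℤ) (h1 : η a = η (a+1)) (h2 : η (a+1) = η (a+2)) :
    Unstable η a ∧ Unstable η (a+1) ∧ Unstable η (a+2) := by
  ring_nf at h1 h2
  refine ⟨?_, ?_, ?_⟩ <;> unfold Unstable <;> ring_nf <;> tauto

lemma mem_cover (η : Config) (x : ℤ) (hx : Unstable η x) :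
    let I := {y : ℤ | Unstable η y ∧ Unstable η (y - 1) ∧ Unstable η (y + 1)}
    x ∈ I ∨ (x - 1) ∈ I ∨ (x + 1) ∈ I := by
  intro I
  rcases hx with ⟨h1, h2⟩ | ⟨h1, h2⟩ | ⟨h1, h2⟩
  · -- chain at x-2: x-2, x-1, x unstable, so x-1 ∈ I
    have := chain_unstable η (x - 2) (by convert h1 using 2 <;> ring) (by convert h2 using 2 <;> ring)
    right; left
    refine ⟨?_, ?_, ?_⟩
    · first | exact this.2.1 | (convert this.2.1 using 1; ring)
    · first | exact this.1 | (convert this.1 using 1; ring)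
    · first | exact this.2.2 | (convert this.2.2 using 1; ring)
  · have := chain_unstable η (x - 1) (by convert h1 using 2 <;> ring) (by convert h2 using 2 <;> ring)
    left
    refine ⟨?_, ?_, ?_⟩
    · first | exact this.2.1 | (convert this.2.1 using 1; ring)
    · first | exact this.1 | (convert this.1 using 1; ring)
    · first | exact this.2.2 | (convert this.2.2 using 1; ring)
  · have := chain_unstable η x h1 (by convert h2 using 2 <;> ring)
    right; right
    refine ⟨?_, ?_, ?_⟩
    · first | exact this.2.1 | (convert this.2.1 using 1; ring)
    · first | exact this.1 | (convert this.1 using 1; ring)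
    · first | exact this.2.2 | (convert this.2.2 using 1; ring)


/-- if the set `U` of unstable sites is finite, then at least a third of the
unstable sites have both neighbors unstable. -/
theorem third_have_unstable_neighbors (η : Config)
    (hfin : {x : ℤ | Unstable η x}.Finite) :
    ({x : ℤ | Unstable η x}.ncard : ℝ) / 3 ≤
      ({x : ℤ | Unstable η x ∧ Unstable η (x - 1) ∧ Unstable η (x + 1)}.ncard : ℝ) := by
  set U := {x : ℤ | Unstable η x} with hU
  set I := {y : ℤ | Unstable η y ∧ Unstable η (y - 1) ∧ Unstable η (y + 1)} with hI
  have hcover : U ⊆ (I ∪ (fun y => y + 1) '' I) ∪ (fun y => y - 1) '' I := by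
    intro x hx
    rcases mem_cover η x hx with h | h | h
    · exact Or.inl (Or.inl h)
    · exact Or.inl (Or.inr ⟨x - 1, h, by ring⟩)
    · exact Or.inr ⟨x + 1, h, by ring⟩
  have hIU : I ⊆ U := fun y hy => hy.1
  have hufin : ((I ∪ (fun y => y + 1) '' I) ∪ (fun y => y - 1) '' I).Finite := by
    have hIfin : I.Finite := hfin.subset hIU
    exact ((hIfin.union (hIfin.image _)).union (hIfin.image _))
  have h1 : U.ncard ≤ 3 * I.ncard := by
    calc U.ncard ≤ ((I ∪ (fun y => y + 1) '' I) ∪ (fun y => y - 1) '' I).ncard :=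
          Set.ncard_le_ncard hcover hufin
      _ ≤ (I ∪ (fun y => y + 1) '' I).ncard + ((fun y => y - 1) '' I).ncard :=
          Set.ncard_union_le _ _
      _ ≤ I.ncard + ((fun y => y + 1) '' I).ncard + ((fun y => y - 1) '' I).ncard := by
          gcongr; exact Set.ncard_union_le _ _
      _ = 3 * I.ncard := by
          rw [Set.ncard_image_of_injective _ (add_left_injective 1),
            Set.ncard_image_of_injective _ (sub_left_injective)]
          ring
  rw [div_le_iff₀ (by norm_num : (0:ℝ) < 3)]
  exact_mod_cast le_trans h1 (by linarith [Nat.le_refl (3 * I.ncard)] : 3 * I.ncard ≤ I.ncard * 3)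
end

section
/- Let η be a configuration whose set U of unstable sites is finite and nonempty, with |U| = I. Then the number of bounded stable regions of η (maximal finite sets of consecutive stable sites {x, x+1, …, x+g} with σ_η(x−1) = σ_η(x+g+1) = 0) is at most I/3 − 1. -/
open MeasureTheory ENNReal
open scoped Classical

/-!
Every unstable site lies in a monochromatic triple, all of whose sites are unstable, so every
maximal run of unstable sites has at least three sites. When the unstable set is finite and
nonempty, each bounded stable region is followed by a run of its own and the leftmost unstable site
starts one more run, so `I ≥ 3 (#regions + 1)`.
-/

def IsRunStart (η : Config) (x : ℤ) : Prop :=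
  Unstable η x ∧ ¬ Unstable η (x - 1)

namespace IsRunStart

variable {η : Config} {x y : ℤ}

/-- The two monochromatic triples through `x - 1` are excluded, so `x` starts one. -/
theorem unstable_add (h : IsRunStart η x) : Unstable η (x + 1) ∧ Unstable η (x + 2) := by
  obtain ⟨hx, hx'⟩ := h
  unfold Unstable at *
  grind

theorem add_three_le (hx : IsRunStart η x) (hy : IsRunStart η y) (hxy : x < y) : x + 3 ≤ y := by
  obtain ⟨hx₁, hx₂⟩ := hx.unstable_add
  by_contra! hlt
  obtain h | h | h : y - 1 = x ∨ y - 1 = x + 1 ∨ y - 1 = x + 2 := by omega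
  exacts [hy.2 (h ▸ hx.1), hy.2 (h ▸ hx₁), hy.2 (h ▸ hx₂)]

end IsRunStart

theorem three_mul_ncard_isRunStart_le {η : Config} (hfin : {x : ℤ | Unstable η x}.Finite) :
    3 * {x | IsRunStart η x}.ncard ≤ {x | Unstable η x}.ncard := by
  have hprod : ({x | IsRunStart η x} ×ˢ (Set.univ : Set (Fin 3))).ncard =
      3 * {x | IsRunStart η x}.ncard := by
    rw [Set.ncard_prod, Set.ncard_univ, Nat.card_fin, mul_comm]
  rw [← hprod]
  refine Set.ncard_le_ncard_of_injOn (fun p => p.1 + p.2) ?_ ?_ hfin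
  · rintro ⟨x, i⟩ ⟨hx, -⟩
    fin_cases i
    exacts [by simpa using hx.1, by simpa using hx.unstable_add.1, hx.unstable_add.2]
  · rintro ⟨x, i⟩ ⟨hx, -⟩ ⟨y, j⟩ ⟨hy, -⟩ hxy
    have hi := i.isLt
    have hj := j.isLt
    have hxy' : x + i = y + j := hxy
    obtain rfl : x = y := by
      rcases lt_trichotomy x y with h | h | h
      · have := hx.add_three_le hy h; omega
      · exact h
      · have := hy.add_three_le hx h; omega
    simp [Fin.ext (by omega : (i : ℕ) = j)]

def boundedStableRegions (η : Config) : Set (ℤ × ℤ) :=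
  {p | p.1 ≤ p.2 ∧ (∀ i : ℤ, p.1 ≤ i → i ≤ p.2 → ¬ Unstable η i) ∧
    Unstable η (p.1 - 1) ∧ Unstable η (p.2 + 1)}

namespace boundedStableRegions

variable {η : Config} {p q : ℤ × ℤ}

theorem isRunStart_snd_add_one (hp : p ∈ boundedStableRegions η) : IsRunStart η (p.2 + 1) :=
  ⟨hp.2.2.2, by simpa using hp.2.1 p.2 hp.1 le_rfl⟩

theorem eq_of_snd_eq (hp : p ∈ boundedStableRegions η) (hq : q ∈ boundedStableRegions η)
    (h : p.2 = q.2) : p = q := by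
  refine Prod.ext ?_ h
  have := hp.1
  have := hq.1
  rcases lt_trichotomy p.1 q.1 with hlt | heq | hgt
  · exact absurd hq.2.2.1 (hp.2.1 _ (by omega) (by omega))
  · exact heq
  · exact absurd hp.2.2.1 (hq.2.1 _ (by omega) (by omega))

theorem ncard_add_one_le (hfin : {x : ℤ | Unstable η x}.Finite)
    (hne : {x : ℤ | Unstable η x}.Nonempty) :
    (boundedStableRegions η).ncard + 1 ≤ {x | IsRunStart η x}.ncard := by
  obtain ⟨m, hm, hmin⟩ := Set.exists_min_image _ id hfin hne
  simp only [id] at hmin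
  have hm_start : IsRunStart η m := ⟨hm, fun h => (hmin _ h).not_gt (sub_one_lt m)⟩
  have hm_lt : ∀ p ∈ boundedStableRegions η, m < p.2 + 1 := fun p hp => by
    linarith [hmin _ hp.2.2.1, hp.1]
  have hinj : Set.InjOn (fun p : ℤ × ℤ => p.2 + 1) (boundedStableRegions η) :=
    fun p hp q hq h => eq_of_snd_eq hp hq (by simpa using h)
  have hsub : insert m ((fun p : ℤ × ℤ => p.2 + 1) '' boundedStableRegions η) ⊆
      {x | IsRunStart η x} := by
    rintro _ (rfl | ⟨p, hp, rfl⟩)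
    exacts [hm_start, isRunStart_snd_add_one hp]
  have hstart_fin : {x | IsRunStart η x}.Finite := hfin.subset fun x hx => hx.1
  calc (boundedStableRegions η).ncard + 1
      = (insert m ((fun p : ℤ × ℤ => p.2 + 1) '' boundedStableRegions η)).ncard := by
        rw [Set.ncard_insert_of_notMem ?_ ((hstart_fin.subset hsub).subset (Set.subset_insert _ _)),
          hinj.ncard_image]
        rintro ⟨p, hp, hpm⟩
        exact (hm_lt p hp).ne' hpm
    _ ≤ {x | IsRunStart η x}.ncard := Set.ncard_le_ncard hsub hstart_fin

end boundedStableRegions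

/-- if the set of unstable sites is finite and nonempty with `I` elements, then
the number of bounded stable regions (maximal finite runs of stable sites, recorded by their
endpoints) is at most `I/3 - 1`. -/
theorem bounded_stable_regions_count (η : Config)
    (hfin : {x : ℤ | Unstable η x}.Finite)
    (hne : {x : ℤ | Unstable η x}.Nonempty) :
    ({p : ℤ × ℤ | p.1 ≤ p.2 ∧ (∀ i : ℤ, p.1 ≤ i → i ≤ p.2 → ¬ Unstable η i) ∧
        Unstable η (p.1 - 1) ∧ Unstable η (p.2 + 1)}.ncard : ℝ) ≤
      ({x : ℤ | Unstable η x}.ncard : ℝ) / 3 - 1 := by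
  have hregions := boundedStableRegions.ncard_add_one_le hfin hne
  have hstarts := three_mul_ncard_isRunStart_le hfin
  change ((boundedStableRegions η).ncard : ℝ) ≤ _
  rw [le_sub_iff_add_le, le_div_iff₀ three_pos]
  exact_mod_cast (by omega : ((boundedStableRegions η).ncard + 1) * 3 ≤ _)
end

section
/- For k = 1, the quantities p_1^S(n,m) for 0 ≤ n ≤ m ≤ 2 take the values: p_1^S(0,0) = 1/2, p_1^S(0,1) = 3/4, p_1^S(0,2) = 1/2, p_1^S(1,1) = 1/2, p_1^S(1,2) = 1/2, and p_1^S(2,2) = 0. -/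
open MeasureTheory ENNReal
open scoped Classical

/-!
After one step, whether `0` is unstable depends only on the new colours at `-2, …, 2`. When
`n, m ≤ 2`, the sites of `[-2, 2]` inside the window `[-n, m]` are stable and keep their colour,
while those outside are unstable: an unstable boundary site next to a stable one lies in a
monochromatic triple pointing away from the window, so its outer neighbour is unstable too. The
outside sites are therefore recoloured by fair coins, and the probability is the number of coin
outcomes creating a monochromatic triple through `0`, divided by `2 ^ 5`. The supremum is the
maximum of this count over window colourings without a monochromatic triple, a finite check,
and it is attained by explicit configurations.
-/

open Finset

lemma Unstable.sub_one_of_not_add_one {η : Config} {x : ℤ} (h : Unstable η x)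
    (h' : ¬Unstable η (x + 1)) :
    Unstable η (x - 1) := by
  simp only [Unstable] at *
  ring_nf at *
  tauto

lemma Unstable.add_one_of_not_sub_one {η : Config} {x : ℤ} (h : Unstable η x)
    (h' : ¬Unstable η (x - 1)) :
    Unstable η (x + 1) := by
  simp only [Unstable] at *
  ring_nf at *
  tauto

lemma sWindow_natCast_iff {η : Config} {n m : ℕ} :
    SWindow η n m ↔ (∀ i ∈ Icc (-n : ℤ) m, ¬Unstable η i) ∧
      Unstable η (-n - 1) ∧ Unstable η (m + 1) := by
  simp [SWindow, Int.toNat_le, neg_le]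

section Coins

variable {μ : Measure (ℕ → ℤ → Bool)}

lemma IIDCoins.measure_cylinder (hμ : IIDCoins μ) (t : ℕ) {k : ℕ} {x : Fin k → ℤ}
    (hx : x.Injective) (v : Fin k → Bool) :
    μ {ω | ∀ i, ω t (x i) = v i} = 1 / 2 ^ k := by
  have hinj : Function.Injective fun i => (t, x i) := fun i j h => hx (Prod.ext_iff.1 h).2
  simpa [hinj.extend_apply, ENNReal.inv_pow] using
    hμ (univ.map ⟨_, hinj⟩) (Function.extend (fun i => (t, x i)) v fun _ => false)

lemma IIDCoins.measure_setOf (hμ : IIDCoins μ) (t : ℕ) {k : ℕ} {x : Fin k → ℤ}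
    (hx : x.Injective) (P : (Fin k → Bool) → Prop) [DecidablePred P] :
    μ {ω | P fun i => ω t (x i)} = #{v | P v} / 2 ^ k := by
  set f : (ℕ → ℤ → Bool) → Fin k → Bool := fun ω i => ω t (x i)
  have hf : Measurable f :=
    measurable_pi_lambda _ fun i => (measurable_pi_apply _).comp (measurable_pi_apply t)
  calc μ {ω | P (f ω)} = μ (f ⁻¹' ({v | P v} : Finset _)) := by simp [Set.preimage]
    _ = ∑ v ∈ {v | P v}, μ (f ⁻¹' {v}) :=
      (sum_measure_preimage_singleton _ fun v _ => hf (measurableSet_singleton v)).symm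
    _ = #{v | P v} / 2 ^ k := by
      simp [f, Set.preimage, funext_iff, hμ.measure_cylinder t hx, div_eq_mul_inv]

end Coins

namespace CandyCrush

-- A pattern `v : Fin 5 → Bool` lists the colours at the sites `-2, …, 2`, which alone decide
-- whether `0` is unstable.
def site (i : Fin 5) : ℤ := i - 2

lemma site_injective : site.Injective := fun i j h => by
  simp only [site, sub_left_inj, Nat.cast_inj] at h
  exact Fin.ext h

def MonoAt (v : Fin 5 → Bool) (j : Fin 3) : Prop :=
  v j.castSucc.castSucc = v j.succ.castSucc ∧ v j.succ.castSucc = v j.succ.succ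

instance (v : Fin 5 → Bool) (j : Fin 3) : Decidable (MonoAt v j) := by
  unfold MonoAt; infer_instance

def CenterMono (v : Fin 5 → Bool) : Prop := ∃ j, MonoAt v j

instance (v : Fin 5 → Bool) : Decidable (CenterMono v) := by
  unfold CenterMono; infer_instance

lemma unstable_zero_iff (η : Config) : Unstable η 0 ↔ CenterMono fun i => η (site i) := by
  simp [Unstable, CenterMono, MonoAt, Fin.exists_fin_succ, site]

def InWindow (n m : ℕ) (i : Fin 5) : Prop := -(n : ℤ) ≤ site i ∧ site i ≤ m

instance (n m : ℕ) (i : Fin 5) : Decidable (InWindow n m i) := by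
  unfold InWindow; infer_instance

def MonoFreeInWindow (n m : ℕ) (w : Fin 5 → Bool) : Prop :=
  ∀ j : Fin 3, InWindow n m j.castSucc.castSucc → InWindow n m j.succ.succ → ¬MonoAt w j

instance (n m : ℕ) (w : Fin 5 → Bool) : Decidable (MonoFreeInWindow n m w) := by
  unfold MonoFreeInWindow; infer_instance

def splice (n m : ℕ) (w v : Fin 5 → Bool) (i : Fin 5) : Bool :=
  if InWindow n m i then w i else v i

def countMono (n m : ℕ) (w : Fin 5 → Bool) : ℕ := #{v | CenterMono (splice n m w v)}

variable {μ : Measure (ℕ → ℤ → Bool)} {η : Config} {n m : ℕ}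

lemma unstable_site_iff (hw : SWindow η n m) (hn : n ≤ 2) (hm : m ≤ 2) (i : Fin 5) :
    Unstable η (site i) ↔ ¬InWindow n m i := by
  obtain ⟨hstable, hleft, hright⟩ := sWindow_natCast_iff.1 hw
  have hstable' : ∀ x, -(n : ℤ) ≤ x → x ≤ m → ¬Unstable η x := fun x h₁ h₂ =>
    hstable x (mem_Icc.2 ⟨h₁, h₂⟩)
  refine ⟨fun hu hin => hstable' _ hin.1 hin.2 hu, fun hout => ?_⟩
  have hi : -2 ≤ site i ∧ site i ≤ 2 := by simp only [site]; omega
  simp only [InWindow] at hout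
  obtain h | h | h | h : site i = -n - 1 ∨ site i = -n - 1 - 1 ∨ site i = m + 1 ∨
      site i = m + 1 + 1 := by omega
  · rwa [h]
  · rw [h]; exact hleft.sub_one_of_not_add_one (hstable' _ (by omega) (by omega))
  · rwa [h]
  · rw [h]; exact hright.add_one_of_not_sub_one (hstable' _ (by omega) (by omega))

lemma monoFreeInWindow_of_sWindow (hw : SWindow η n m) :
    MonoFreeInWindow n m fun i => η (site i) := by
  intro j hj _ hmono
  refine (sWindow_natCast_iff.1 hw).1 _ (mem_Icc.2 hj) (Or.inr (Or.inr ?_))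
  fin_cases j <;> simpa [MonoAt, site] using hmono

lemma setOf_unstable_evolve_one (η : Config) :
    {ω | Unstable (evolve ω η 1) 0} =
      {ω | CenterMono fun i => if Unstable η (site i) then ω 0 (site i) else η (site i)} := by
  ext ω
  exact unstable_zero_iff _

lemma measure_unstable_evolve_one (hμ : IIDCoins μ) (hw : SWindow η n m) (hn : n ≤ 2)
    (hm : m ≤ 2) :
    μ {ω | Unstable (evolve ω η 1) 0} = countMono n m (fun i => η (site i)) / 2 ^ 5 := by
  have hrecolor : ∀ ω : ℕ → ℤ → Bool,
      (fun i => if Unstable η (site i) then ω 0 (site i) else η (site i)) =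
        splice n m (fun i => η (site i)) fun i => ω 0 (site i) := by
    intro ω
    funext i
    by_cases hi : InWindow n m i <;> simp [splice, hi, unstable_site_iff hw hn hm]
  simp only [setOf_unstable_evolve_one, hrecolor]
  exact hμ.measure_setOf 0 site_injective fun v =>
    CenterMono (splice n m (fun i => η (site i)) v)

lemma pS_one_eq_of_maxCount (hμ : IIDCoins μ) (n m : ℕ) (η : Config) (N : ℕ) (hn : n ≤ 2)
    (hm : m ≤ 2) (hw : SWindow η n m) (hη : countMono n m (fun i => η (site i)) = N)
    (hN : ∀ w, MonoFreeInWindow n m w → countMono n m w ≤ N) :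
    pS μ 1 n m = N / 2 ^ 5 := by
  refine le_antisymm (iSup₂_le fun η' hw' => ?_) ?_
  · rw [measure_unstable_evolve_one hμ hw' hn hm]
    gcongr
    exact hN _ (monoFreeInWindow_of_sWindow hw')
  · rw [← hη, ← measure_unstable_evolve_one hμ hw hn hm]
    exact le_iSup₂ (f := fun η (_ : SWindow η n m) => μ {ω | Unstable (evolve ω η 1) 0})
      η hw

end CandyCrush

open CandyCrush in
theorem p1S_values_general (μ : Measure (ℕ → ℤ → Bool))
    (hμ : IIDCoins μ) :
    pS μ 1 0 0 = 1 / 2 ∧ pS μ 1 0 1 = 3 / 4 ∧ pS μ 1 0 2 = 1 / 2 ∧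
    pS μ 1 1 1 = 1 / 2 ∧ pS μ 1 1 2 = 1 / 2 ∧ pS μ 1 2 2 = 0 := by
  have h00 := pS_one_eq_of_maxCount hμ 0 0 (fun x => decide (x = 0)) 16
    (by decide) (by decide) (sWindow_natCast_iff.2 (by decide)) (by decide) (by decide)
  have h01 := pS_one_eq_of_maxCount hμ 0 1 (fun x => decide (x = 0 ∨ x = 1)) 24
    (by decide) (by decide) (sWindow_natCast_iff.2 (by decide)) (by decide) (by decide)
  have h02 := pS_one_eq_of_maxCount hμ 0 2 (fun x => decide (x = 0 ∨ x = 1 ∨ 3 ≤ x)) 16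
    (by decide) (by decide) (sWindow_natCast_iff.2 (by decide)) (by decide) (by decide)
  have h11 := pS_one_eq_of_maxCount hμ 1 1 (fun x => decide (x = -1 ∨ x = 0 ∨ 2 ≤ x)) 16
    (by decide) (by decide) (sWindow_natCast_iff.2 (by decide)) (by decide) (by decide)
  have h12 := pS_one_eq_of_maxCount hμ 1 2 (fun x => decide (x = -1 ∨ x = 0 ∨ x = 2)) 16
    (by decide) (by decide) (sWindow_natCast_iff.2 (by decide)) (by decide) (by decide)
  have h22 := pS_one_eq_of_maxCount hμ 2 2 (fun x => decide (x ≤ -3 ∨ x = 0 ∨ 3 ≤ x)) 0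
    (by decide) (by decide) (sWindow_natCast_iff.2 (by decide)) (by decide) (by decide)
  simp only [Nat.cast_zero, Nat.cast_one, Nat.cast_ofNat] at h00 h01 h02 h11 h12 h22
  refine ⟨h00.trans ?_, h01.trans ?_, h02.trans ?_, h11.trans ?_, h12.trans ?_,
    by simpa using h22⟩ <;> rw [ENNReal.div_eq_div_iff] <;> norm_num

/-- the values of `p_1^S(n, m)` for `0 ≤ n ≤ m ≤ 2`. -/
theorem p1S_values (μ : Measure (ℕ → ℤ → Bool)) [IsProbabilityMeasure μ]
    (hμ : IIDCoins μ) :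
    pS μ 1 0 0 = 1 / 2 ∧ pS μ 1 0 1 = 3 / 4 ∧ pS μ 1 0 2 = 1 / 2 ∧
    pS μ 1 1 1 = 1 / 2 ∧ pS μ 1 1 2 = 1 / 2 ∧ pS μ 1 2 2 = 0 :=
  p1S_values_general μ hμ
end

section
/- Let η be a configuration whose set of unstable sites is finite and nonempty, with I(η) unstable sites. Then E[I(R(η))] ≤ (5/4) · I(η), where I(ξ) denotes the number of unstable sites of a configuration ξ. -/
open MeasureTheory ENNReal
open scoped Classical

section AuxCC

/-! ### Auxiliary machinery -/

/-- Extension of five coin values to a coin field, centered at `y`. -/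
def ext5 (y : ℤ) (v : Fin 5 → Bool) : ℤ → Bool := fun z =>
  if z = y - 2 then v 0 else if z = y - 1 then v 1 else if z = y then v 2
  else if z = y + 1 then v 3 else if z = y + 2 then v 4 else false

/-- The number of 5-tuples of fresh coins near `y` that make `y` unstable after one update. -/
def cnt (η : Config) (y : ℤ) : ℕ :=
  (Finset.univ.filter (fun v : Fin 5 → Bool => Unstable (update η (ext5 y v)) y)).card

/-- Embed a 9-bit window as a configuration supported on `[-4,4]`. -/
def emb9 (b : Fin 9 → Bool) : Config := fun z =>
  if h : (z + 4).toNat < 9 ∧ -4 ≤ z then b ⟨(z + 4).toNat, h.1⟩ else false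

def cntL (b : Fin 9 → Bool) : ℕ := cnt (emb9 b) 0

def phiTable : List ℤ := [-240, -144, -176, -48, -80, -80, 48, -240, -80, 32, 32, 32, 128, 128, -144, -240, -240, -144, 0, 0, 0, 0, 0, -128, -32, 64, 64, 64, -48, -176, -144, -240, -240, -144, -176, -48, 0, 0, 0, -64, -128, 0, 0, 0, 0, 0, -160, -256, -224, -128, 0, 0, 0, 0, 0, -128, -240, 48, -80, -80, -48, -176, -144, -240, -240, -144, -176, -48, -80, -80, 48, -240, -128, 0, 0, 0, 0, 0, -128, -224, -256, -160, 0, 0, 0, 0, 0, -128, -64, 0, 0, 0, -48, -176, -144, -240, -240, -144, -176, -48, 0, 0, 0, -64, -128, 0, 0, 0, 0, 0, -160, -256, -240, -144, 128, 128, 32, 32, 32, -80, -240, 48, -80, -80, -48, -176, -144, -240, -240, -144, -176, -48, -80, -80, 48, -240, -80, 32, 32, 32, 128, 128, -144, -240, -256, -160, 0, 0, 0, 0, 0, -128, -64, 0, 0, 0, -48, -176, -144, -240, -240, -144, -176, -48, 0, 0, 0, -64, -128, 0, 0, 0, 0, 0, -160, -256, -224, -128, 0, 0, 0, 0, 0,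 -128, -240, 48, -80, -80, -48, -176, -144, -240, -240, -144, -176, -48, -80, -80, 48, -240, -128, 0, 0, 0, 0, 0, -128, -224, -256, -160, 0, 0, 0, 0, 0, -128, -64, 0, 0, 0, -48, -176, -144, -240, -240, -144, -176, -48, 64, 64, 64, -32, -128, 0, 0, 0, 0, 0, -144, -240, -240, -144, 128, 128, 32, 32, 32, -80, -240, 48, -80, -80, -48, -176, -144, -240]

def idx8 (b : Fin 8 → Bool) : ℕ := ∑ i : Fin 8, if b i then 2 ^ (i : ℕ) else 0

/-- The potential function used in the amortized (telescoping) bound. -/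
def phi (b : Fin 8 → Bool) : ℤ := phiTable.getD (idx8 b) 0

def pre9 (b : Fin 9 → Bool) : Fin 8 → Bool := fun i => b i.castSucc
def suf9 (b : Fin 9 → Bool) : Fin 8 → Bool := fun i => b i.succ

def run3 (b : Fin 8 → Bool) : Prop :=
  ∃ i : Fin 6, b (i.castLE (by norm_num)) = b ((i.succ).castLE (by norm_num)) ∧
    b ((i.succ).castLE (by norm_num)) = b (i.succ.succ)

instance (b : Fin 8 → Bool) : Decidable (run3 b) := by unfold run3; infer_instance

set_option maxHeartbeats 16000000 in
set_option maxRecDepth 1000000 in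
theorem keyB : ∀ b : Fin 8 → Bool, ¬ run3 b → phi b = 0 := by decide

set_option maxHeartbeats 16000000 in
set_option maxRecDepth 1000000 in
theorem keyA : ∀ b : Fin 9 → Bool,
    4 * (cntL b : ℤ) + phi (pre9 b) ≤
      160 * (if Unstable (emb9 b) 0 then 1 else 0) + phi (suf9 b) := by decide

/-! ### Congruence and shift lemmas -/

theorem unstable_congr_s15 {η₁ η₂ : Config} {x : ℤ}
    (h : ∀ z, x - 2 ≤ z → z ≤ x + 2 → η₁ z = η₂ z) : Unstable η₁ x ↔ Unstable η₂ x := by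
  unfold Unstable
  rw [h (x-2) (by omega) (by omega), h (x-1) (by omega) (by omega),
     h x (by omega) (by omega), h (x+1) (by omega) (by omega), h (x+2) (by omega) (by omega)]

theorem unstable_update_congr {η₁ η₂ : Config} {c₁ c₂ : ℤ → Bool} {x : ℤ}
    (hη : ∀ z, x - 4 ≤ z → z ≤ x + 4 → η₁ z = η₂ z)
    (hc : ∀ z, x - 2 ≤ z → z ≤ x + 2 → c₁ z = c₂ z) :
    Unstable (update η₁ c₁) x ↔ Unstable (update η₂ c₂) x := by
  apply unstable_congr_s15
  intro z h1 h2
  unfold update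
  have hz : Unstable η₁ z ↔ Unstable η₂ z :=
    unstable_congr_s15 (fun w hw1 hw2 => hη w (by omega) (by omega))
  by_cases h : Unstable η₁ z
  · rw [if_pos h, if_pos (hz.mp h)]; exact hc z h1 h2
  · rw [if_neg h, if_neg (fun hh => h (hz.mpr hh))]; exact hη z (by omega) (by omega)

theorem unstable_shift (η : Config) (t x : ℤ) :
    Unstable (fun z => η (z + t)) x ↔ Unstable η (x + t) := by
  simp only [Unstable]
  rw [show x - 2 + t = x + t - 2 by ring, show x - 1 + t = x + t - 1 by ring,
      show x + 1 + t = x + t + 1 by ring, show x + 2 + t = x + t + 2 by ring]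

theorem update_shift (η : Config) (c : ℤ → Bool) (t : ℤ) :
    update (fun z => η (z + t)) (fun z => c (z + t)) = fun z => update η c (z + t) := by
  funext z
  simp only [update, unstable_shift]

theorem ext5_shift (y : ℤ) (v : Fin 5 → Bool) (z : ℤ) : ext5 y v (z + y) = ext5 0 v z := by
  unfold ext5
  refine if_congr (by omega) rfl (if_congr (by omega) rfl (if_congr (by omega) rfl
    (if_congr (by omega) rfl (if_congr (by omega) rfl rfl))))

theorem cnt_shift (η : Config) (y : ℤ) : cnt η y = cnt (fun z => η (z + y)) 0 := by
  unfold cnt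
  congr 1
  apply Finset.filter_congr
  intro v _
  have h1 : (fun z => ext5 y v (z + y)) = ext5 0 v := funext fun z => ext5_shift y v z
  have h2 : update (fun z => η (z + y)) (ext5 0 v) = fun z => update η (ext5 y v) (z + y) := by
    rw [← h1, update_shift]
  rw [h2, unstable_shift (update η (ext5 y v)) y 0, zero_add]

def wnd9 (η : Config) (y : ℤ) : Fin 9 → Bool := fun i => η (y - 4 + (i.1 : ℤ))
def wnd8 (η : Config) (y : ℤ) : Fin 8 → Bool := fun i => η (y - 4 + (i.1 : ℤ))

theorem emb9_wnd9 (η : Config) (y : ℤ) :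
    ∀ z, -4 ≤ z → z ≤ 4 → emb9 (wnd9 η y) z = η (z + y) := by
  intro z h1 h2
  unfold emb9
  rw [dif_pos ⟨by omega, h1⟩]
  show η (y - 4 + ((z + 4).toNat : ℤ)) = η (z + y)
  congr 1
  omega

theorem cnt_eq (η : Config) (y : ℤ) : cnt η y = cntL (wnd9 η y) := by
  rw [cnt_shift]
  unfold cntL cnt
  congr 1
  apply Finset.filter_congr
  intro v _
  exact unstable_update_congr
    (fun z hz1 hz2 => (emb9_wnd9 η y z (by omega) (by omega)).symm)
    (fun z _ _ => rfl)

theorem unstable_wnd (η : Config) (y : ℤ) : Unstable η y ↔ Unstable (emb9 (wnd9 η y)) 0 := by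
  have h1 : Unstable (fun z => η (z + y)) 0 ↔ Unstable η y := by rw [unstable_shift, zero_add]
  rw [← h1]
  exact unstable_congr_s15 (fun z hz1 hz2 => (emb9_wnd9 η y z (by omega) (by omega)).symm)

theorem pre9_wnd9 (η : Config) (y : ℤ) : pre9 (wnd9 η y) = wnd8 η y := rfl

theorem suf9_wnd9 (η : Config) (y : ℤ) : suf9 (wnd9 η y) = wnd8 η (y + 1) := by
  funext i
  show η (y - 4 + ((i.succ : Fin 9).1 : ℤ)) = η (y + 1 - 4 + (i.1 : ℤ))
  have h : ((i.succ : Fin 9)).1 = i.1 + 1 := rfl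
  rw [h]
  congr 1
  push_cast
  ring

/-! ### The telescoping bound -/

def psiInt (η : Config) (y : ℤ) : ℤ :=
  4 * (cnt η y : ℤ) - 160 * (if Unstable η y then 1 else 0)

theorem step_bound (η : Config) (y : ℤ) :
    psiInt η y + phi (wnd8 η y) ≤ phi (wnd8 η (y + 1)) := by
  have h := keyA (wnd9 η y)
  rw [pre9_wnd9, suf9_wnd9, ← cnt_eq] at h
  unfold psiInt
  by_cases hy : Unstable η y
  · rw [if_pos hy]
    rw [if_pos ((unstable_wnd η y).mp hy)] at h
    linarith
  · rw [if_neg hy]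
    rw [if_neg (fun c => hy ((unstable_wnd η y).mpr c))] at h
    linarith

theorem tele (η : Config) (a : ℤ) :
    ∀ b : ℤ, a - 1 ≤ b →
      (∑ y ∈ Finset.Icc a b, psiInt η y) + phi (wnd8 η a) ≤ phi (wnd8 η (b + 1)) := by
  refine Int.le_induction ?_ ?_
  · rw [Finset.Icc_eq_empty (by omega), Finset.sum_empty, zero_add,
      show a - 1 + 1 = a from by ring]
  · intro n hn ih
    have hins : Finset.Icc a (n + 1) = insert (n + 1) (Finset.Icc a n) := by
      ext t
      simp only [Finset.mem_Icc, Finset.mem_insert]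
      omega
    rw [hins, Finset.sum_insert (by simp only [Finset.mem_Icc]; omega)]
    have hstep := step_bound η (n + 1)
    linarith

theorem phi_wnd_zero (η : Config) (y : ℤ)
    (h : ∀ z, y - 4 ≤ z → z ≤ y + 5 → ¬ Unstable η z) : phi (wnd8 η y) = 0 := by
  apply keyB
  rintro ⟨i, h1, h2⟩
  have hi : (i.1 : ℤ) < 6 := by exact_mod_cast i.isLt
  apply h (y - 4 + (i.1 : ℤ)) (by omega) (by omega)
  have e1 : η (y - 4 + (i.1 : ℤ)) = η ((y - 4 + (i.1 : ℤ)) + 1) := by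
    have h1' : η (y - 4 + ((i.1 : ℕ) : ℤ)) = η (y - 4 + ((i.1 + 1 : ℕ) : ℤ)) := h1
    rw [h1']; congr 1; push_cast; ring
  have e2 : η ((y - 4 + (i.1 : ℤ)) + 1) = η ((y - 4 + (i.1 : ℤ)) + 2) := by
    have h2' : η (y - 4 + ((i.1 + 1 : ℕ) : ℤ)) = η (y - 4 + ((i.1 + 2 : ℕ) : ℤ)) := h2
    have e : η ((y - 4 + (i.1 : ℤ)) + 1) = η (y - 4 + ((i.1 + 1 : ℕ) : ℤ)) := by
      congr 1; push_cast; ring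
    rw [e, h2']; congr 1; push_cast; ring
  exact Or.inr (Or.inr ⟨e1, e2⟩)

theorem main_count (η : Config) (N : ℤ) (hN : 0 ≤ N)
    (hU : ∀ x, Unstable η x → -N ≤ x ∧ x ≤ N) :
    (∑ y ∈ Finset.Icc (-(N+10)) (N+10), (cnt η y : ℤ))
      ≤ 40 * ((((Finset.Icc (-(N+10)) (N+10)).filter fun x => Unstable η x)).card : ℤ) := by
  have ht := tele η (-(N+10)) (N+10) (by omega)
  rw [phi_wnd_zero η (-(N+10)) (fun z hz1 hz2 hz => by have := hU z hz; omega),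
      phi_wnd_zero η ((N+10)+1) (fun z hz1 hz2 hz => by have := hU z hz; omega)] at ht
  have hsum : ∑ y ∈ Finset.Icc (-(N+10)) (N+10), psiInt η y
      = 4 * (∑ y ∈ Finset.Icc (-(N+10)) (N+10), (cnt η y : ℤ))
        - 160 * (∑ y ∈ Finset.Icc (-(N+10)) (N+10), (if Unstable η y then (1:ℤ) else 0)) := by
    unfold psiInt
    rw [Finset.sum_sub_distrib, Finset.mul_sum, Finset.mul_sum]
  have hcard : ∑ y ∈ Finset.Icc (-(N+10)) (N+10), (if Unstable η y then (1:ℤ) else 0)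
      = ((((Finset.Icc (-(N+10)) (N+10)).filter fun x => Unstable η x)).card : ℤ) := by
    rw [Finset.card_filter]
    push_cast
    rfl
  rw [hsum, hcard] at ht
  linarith

/-! ### Measure-theoretic lemmas -/

def cyl (x : ℤ) (v : Fin 5 → Bool) : Set (ℕ → ℤ → Bool) :=
  {ω | ∀ i : Fin 5, ω 0 (x - 2 + (i.1 : ℤ)) = v i}

theorem cyl_meas (x : ℤ) (v : Fin 5 → Bool) : MeasurableSet (cyl x v) := by
  have h : cyl x v = ⋂ i : Fin 5,
      (fun ω : ℕ → ℤ → Bool => ω 0 (x - 2 + (i.1 : ℤ))) ⁻¹' {v i} := by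
    ext ω; simp [cyl]
  rw [h]
  exact MeasurableSet.iInter fun i =>
    ((measurable_pi_apply _).comp (measurable_pi_apply 0)) (measurableSet_singleton _)

theorem ext5_val (x : ℤ) (v : Fin 5 → Bool) (i : Fin 5) :
    ext5 x v (x - 2 + (i.1 : ℤ)) = v i := by
  have hi : (i.1 : ℤ) < 5 := by exact_mod_cast i.isLt
  unfold ext5
  split_ifs with c1 c2 c3 c4 c5
  · rw [show i = (0 : Fin 5) from Fin.ext (by omega)]
  · rw [show i = (1 : Fin 5) from Fin.ext (by omega)]
  · rw [show i = (2 : Fin 5) from Fin.ext (by omega)]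
  · rw [show i = (3 : Fin 5) from Fin.ext (by omega)]
  · rw [show i = (4 : Fin 5) from Fin.ext (by omega)]
  · omega

theorem coin_agree {x : ℤ} {ω₀ : ℤ → Bool} {v : Fin 5 → Bool}
    (h : ∀ i : Fin 5, ω₀ (x - 2 + (i.1 : ℤ)) = v i) :
    ∀ z, x - 2 ≤ z → z ≤ x + 2 → ω₀ z = ext5 x v z := by
  intro z h1 h2
  have hlt : (z - (x - 2)).toNat < 5 := by omega
  set i : Fin 5 := ⟨(z - (x - 2)).toNat, hlt⟩ with hidef
  have hz : z = x - 2 + (i.1 : ℤ) := by simp [hidef]; omega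
  rw [hz, h i, ← ext5_val x v i]

theorem Ev_eq (η : Config) (x : ℤ) :
    {ω : ℕ → ℤ → Bool | Unstable (update η (ω 0)) x}
      = ⋃ v ∈ Finset.univ.filter (fun v : Fin 5 → Bool => Unstable (update η (ext5 x v)) x),
          cyl x v := by
  ext ω
  simp only [Set.mem_setOf_eq, Set.mem_iUnion, Finset.mem_filter, Finset.mem_univ, true_and,
    exists_prop]
  constructor
  · intro hω
    refine ⟨fun i => ω 0 (x - 2 + (i.1 : ℤ)), ?_, fun i => rfl⟩
    exact (unstable_update_congr (fun _ _ _ => rfl)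
      (coin_agree (fun i => rfl))).mp hω
  · rintro ⟨v, hv, hω⟩
    exact (unstable_update_congr (fun _ _ _ => rfl) (coin_agree hω)).mpr hv

theorem Ev_meas (η : Config) (x : ℤ) :
    MeasurableSet {ω : ℕ → ℤ → Bool | Unstable (update η (ω 0)) x} := by
  rw [Ev_eq]
  exact Finset.measurableSet_biUnion _ (fun v _ => cyl_meas x v)

theorem cyl_prob {μ : Measure (ℕ → ℤ → Bool)} (hμ : IIDCoins μ) (x : ℤ) (v : Fin 5 → Bool) :
    μ (cyl x v) = (1/2 : ℝ≥0∞)^5 := by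
  have hinj : Function.Injective (fun i : Fin 5 => ((0 : ℕ), x - 2 + (i.1 : ℤ))) := by
    intro i j hij
    have h2 : x - 2 + (i.1 : ℤ) = x - 2 + (j.1 : ℤ) := congrArg Prod.snd hij
    exact Fin.ext (by omega)
  have h := hμ (Finset.univ.image fun i : Fin 5 => ((0 : ℕ), x - 2 + (i.1 : ℤ)))
    (fun p => ext5 x v p.2)
  have hcard : (Finset.univ.image fun i : Fin 5 => ((0 : ℕ), x - 2 + (i.1 : ℤ))).card = 5 := by
    rw [Finset.card_image_of_injective _ hinj, Finset.card_univ, Fintype.card_fin]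
  have hset : {ω : ℕ → ℤ → Bool |
      ∀ p ∈ (Finset.univ.image fun i : Fin 5 => ((0 : ℕ), x - 2 + (i.1 : ℤ))),
        ω p.1 p.2 = ext5 x v p.2} = cyl x v := by
    ext ω
    simp only [Set.mem_setOf_eq, Finset.mem_image, Finset.mem_univ, true_and]
    constructor
    · intro hω i
      have := hω (0, x - 2 + (i.1 : ℤ)) ⟨i, rfl⟩
      simpa [ext5_val] using this
    · rintro hω p ⟨i, rfl⟩
      simpa [ext5_val] using hω i
  rw [← hset, h, hcard]

theorem mu_Ev {μ : Measure (ℕ → ℤ → Bool)} (hμ : IIDCoins μ) (η : Config) (x : ℤ) :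
    μ {ω : ℕ → ℤ → Bool | Unstable (update η (ω 0)) x}
      = (cnt η x : ℝ≥0∞) * (1/2 : ℝ≥0∞)^5 := by
  rw [Ev_eq η x]
  rw [measure_biUnion_finset ?hd (fun v _ => cyl_meas x v)]
  case hd =>
    intro v _ w _ hvw
    exact Set.disjoint_left.mpr fun ω hv hw => hvw (funext fun i => (hv i).symm.trans (hw i))
  rw [Finset.sum_congr rfl (fun v _ => cyl_prob hμ x v), Finset.sum_const, nsmul_eq_mul]
  rw [show (Finset.univ.filter
      (fun v : Fin 5 → Bool => Unstable (update η (ext5 x v)) x)).card = cnt η x from rfl]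

theorem unstable_update_subset {η : Config} {c : ℤ → Bool} {x : ℤ}
    (h : Unstable (update η c) x) : ∃ s, x - 2 ≤ s ∧ s ≤ x + 2 ∧ Unstable η s := by
  by_contra hno
  push_neg at hno
  have hagree : ∀ z, x - 2 ≤ z → z ≤ x + 2 → update η c z = η z := by
    intro z h1 h2
    exact if_neg (fun hz => (hno z h1 (by omega)) hz)
  exact (hno x (by omega) (by omega)) ((unstable_congr_s15 hagree).mp h)

theorem numUnstable_sum (ξ : Config) (F : Finset ℤ)
    (hsub : ∀ x, Unstable ξ x → x ∈ F) :
    ((numUnstable ξ : ℕ∞) : ℝ≥0∞) = ∑ x ∈ F, (if Unstable ξ x then (1:ℝ≥0∞) else 0) := by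
  have hset : {x | Unstable ξ x} = ↑(F.filter fun x => Unstable ξ x) := by
    ext x
    simp only [Finset.coe_filter, Set.mem_setOf_eq]
    exact ⟨fun h => ⟨hsub x h, h⟩, fun h => h.2⟩
  rw [show numUnstable ξ = {x | Unstable ξ x}.encard from rfl, hset,
    Set.encard_coe_eq_coe_finsetCard, ENat.toENNReal_coe, Finset.card_filter, Nat.cast_sum]
  refine Finset.sum_congr rfl fun x _ => ?_
  split_ifs <;> simp

end AuxCC


/-- `E[I(R(η))] ≤ (5/4) I(η)` for configurations with finitely many (and at
least one) unstable sites. -/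
theorem one_step_bound (μ : Measure (ℕ → ℤ → Bool)) [IsProbabilityMeasure μ]
    (hμ : IIDCoins μ) (η : Config)
    (hfin : {x : ℤ | Unstable η x}.Finite)
    (hne : {x : ℤ | Unstable η x}.Nonempty) :
    ∫⁻ ω, (numUnstable (evolve ω η 1) : ℝ≥0∞) ∂μ ≤
      (5 / 4 : ℝ≥0∞) * (numUnstable η : ℝ≥0∞) := by
  classical
  obtain ⟨lo, hlo⟩ := hfin.bddBelow
  obtain ⟨hi, hhi⟩ := hfin.bddAbove
  set N : ℤ := max (max (-lo) hi) 0 with hNdef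
  have hN0 : (0:ℤ) ≤ N := le_max_right _ _
  have hA : -lo ≤ N := le_trans (le_max_left _ _) (le_max_left _ _)
  have hB : hi ≤ N := le_trans (le_max_right _ _) (le_max_left _ _)
  have hU : ∀ x, Unstable η x → -N ≤ x ∧ x ≤ N := by
    intro x hx
    have h1 : lo ≤ x := hlo (show x ∈ {x | Unstable η x} from hx)
    have h2 : x ≤ hi := hhi (show x ∈ {x | Unstable η x} from hx)
    omega
  set F : Finset ℤ := Finset.Icc (-(N+10)) (N+10) with hFdef
  set cardU : ℕ := (F.filter fun x => Unstable η x).card with hcardU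
  -- count inequality
  have hcountZ := main_count η N hN0 hU
  have hcount : (∑ x ∈ F, cnt η x) ≤ 40 * cardU := by
    have : ((∑ x ∈ F, cnt η x : ℕ) : ℤ) ≤ ((40 * cardU : ℕ) : ℤ) := by push_cast; exact hcountZ
    exact_mod_cast this
  -- numUnstable η
  have hνη : (numUnstable η : ℝ≥0∞) = (cardU : ℝ≥0∞) := by
    rw [numUnstable_sum η F (fun x hx => by
      have := hU x hx
      simp only [hFdef, Finset.mem_Icc]
      omega)]
    rw [hcardU, Finset.card_filter, Nat.cast_sum]
    refine Finset.sum_congr rfl fun x _ => ?_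
    split_ifs <;> simp
  -- the evolve unfolds
  have hev1 : ∀ ω : ℕ → ℤ → Bool, evolve ω η 1 = update η (ω 0) := fun ω => rfl
  have h40 : (40 : ℝ≥0∞) * (1/2 : ℝ≥0∞)^5 = 5/4 := by
    have h32 : ((1:ℝ≥0∞)/2)^5 = (32 : ℝ≥0∞)⁻¹ := by
      rw [one_div, ← ENNReal.inv_pow]
      norm_num
    have h8 : (8:ℝ≥0∞) * 8⁻¹ = 1 := ENNReal.mul_inv_cancel (by norm_num) (by norm_num)
    rw [h32]
    calc (40:ℝ≥0∞) * 32⁻¹ = (5*8) * ((4:ℝ≥0∞)*8)⁻¹ := by norm_num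
      _ = (5*8) * (4⁻¹*8⁻¹) := by
          rw [ENNReal.mul_inv (Or.inl (by norm_num)) (Or.inl (by norm_num))]
      _ = 5 * 4⁻¹ * (8 * 8⁻¹) := by ring
      _ = 5 * 4⁻¹ := by rw [h8, mul_one]
      _ = 5 / 4 := (div_eq_mul_inv _ _).symm
  calc ∫⁻ ω, (numUnstable (evolve ω η 1) : ℝ≥0∞) ∂μ
      = ∫⁻ ω, ∑ x ∈ F, (if Unstable (update η (ω 0)) x then (1:ℝ≥0∞) else 0) ∂μ := by
        apply lintegral_congr
        intro ω
        rw [hev1 ω]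
        exact numUnstable_sum (update η (ω 0)) F (fun x hx => by
          obtain ⟨s, hs1, hs2, hs3⟩ := unstable_update_subset hx
          have := hU s hs3
          simp only [hFdef, Finset.mem_Icc]
          omega)
    _ = ∑ x ∈ F, ∫⁻ ω, (if Unstable (update η (ω 0)) x then (1:ℝ≥0∞) else 0) ∂μ := by
        apply lintegral_finset_sum
        intro x _
        exact Measurable.ite (Ev_meas η x) measurable_const measurable_const
    _ = ∑ x ∈ F, μ {ω : ℕ → ℤ → Bool | Unstable (update η (ω 0)) x} := by
        refine Finset.sum_congr rfl fun x _ => ?_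
        rw [← lintegral_indicator_one (Ev_meas η x)]
        apply lintegral_congr
        intro ω
        by_cases hω : Unstable (update η (ω 0)) x
        · simp [Set.indicator, hω]
        · simp [Set.indicator, hω]
    _ = ∑ x ∈ F, (cnt η x : ℝ≥0∞) * (1/2 : ℝ≥0∞)^5 := by
        exact Finset.sum_congr rfl fun x _ => mu_Ev hμ η x
    _ = ((∑ x ∈ F, cnt η x : ℕ) : ℝ≥0∞) * (1/2 : ℝ≥0∞)^5 := by
        rw [Nat.cast_sum, Finset.sum_mul]
    _ ≤ ((40 * cardU : ℕ) : ℝ≥0∞) * (1/2 : ℝ≥0∞)^5 := by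
        exact mul_le_mul_left (by exact_mod_cast hcount) _
    _ = (5/4 : ℝ≥0∞) * (cardU : ℝ≥0∞) := by
        push_cast
        rw [mul_comm (40 : ℝ≥0∞) (cardU : ℝ≥0∞), mul_assoc, h40, mul_comm]
    _ = (5/4 : ℝ≥0∞) * (numUnstable η : ℝ≥0∞) := by rw [hνη]
end
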